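/- Let d = ((d_i^+, d_i^-))_{i=1}^N be a digraphic integer-pair sequence. Suppose there exist distinct coordinates j_1, j_2, j_3 and an integer pair (k,l) with k ≥ 1 and l ≥ 1 such that: (1) d_{j_1} = d_{j_2} = d_{j_3} = (k,l); (2) in the positive lexicographical ordering d̄ of d, coordinates l, l+1, l+2 equal (k,l), and in the negative lexicographical ordering d̲ of d, coordinates k, k+1, k+2 equal (k,l); and (3) the slack sequences satisfy (s̄_{l-1}, s̄_l, s̄_{l+1}, s̄_{l+2}) = (0,1,1,0) and (s̲_{k-1}, s̲_k, s̲_{k+1}, s̲_{k+2}) = (0,1,1,0). Then in every realization G ∈ R(d), the vertices v_{j_1}, v_{j_2}, v_{j_3} induce a directed 3-cycle. -/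

import Mathlib

/-- A simple directed graph on vertex set `V`: an irreflexive (Boolean) arc
relation, i.e. no self-loops and at most one arc in each direction. -/
structure SDigraph (V : Type) where
  Adj : V → V → Bool
  irrefl : ∀ v, Adj v v = false

/-- Out-degree of a vertex. -/
def SDigraph.outDeg {V : Type} [Fintype V] [DecidableEq V]
    (G : SDigraph V) (v : V) : ℕ :=
  (Finset.univ.filter fun x => G.Adj v x = true).card

/-- In-degree of a vertex. -/
def SDigraph.inDeg {V : Type} [Fintype V] [DecidableEq V]
    (G : SDigraph V) (v : V) : ℕ :=
  (Finset.univ.filter fun x => G.Adj x v = true).card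

/-- `G` realizes the integer-pair (degree) sequence `d`: vertex `v` has
out-degree `(d v).1` and in-degree `(d v).2`. -/
def Realizes {V : Type} [Fintype V] [DecidableEq V]
    (G : SDigraph V) (d : V → ℕ × ℕ) : Prop :=
  ∀ v, G.outDeg v = (d v).1 ∧ G.inDeg v = (d v).2

/-- `H` is obtained from `G` by a single 2-switch: arcs `(v₁,v₂)`, `(v₃,v₄)`
are replaced by `(v₁,v₄)`, `(v₃,v₂)`, allowed only when the four vertices
are distinct, the former two are arcs and the latter two are not. -/
def TwoSwitch {V : Type} [DecidableEq V] (G H : SDigraph V) : Prop :=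
  ∃ v₁ v₂ v₃ v₄ : V,
    v₁ ≠ v₂ ∧ v₁ ≠ v₃ ∧ v₁ ≠ v₄ ∧ v₂ ≠ v₃ ∧ v₂ ≠ v₄ ∧ v₃ ≠ v₄ ∧
    G.Adj v₁ v₂ = true ∧ G.Adj v₃ v₄ = true ∧
    G.Adj v₁ v₄ = false ∧ G.Adj v₃ v₂ = false ∧
    ∀ x y, H.Adj x y =
      if (x = v₁ ∧ y = v₂) ∨ (x = v₃ ∧ y = v₄) then false
      else if (x = v₁ ∧ y = v₄) ∨ (x = v₃ ∧ y = v₂) then true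
      else G.Adj x y

/-- `G` and `H` differ by a single 2-switch (in either direction). -/
def TwoSwitchStep {V : Type} [DecidableEq V] (G H : SDigraph V) : Prop :=
  TwoSwitch G H ∨ TwoSwitch H G

/-- `H` is reachable from `G` by a finite sequence of 2-switches. -/
def Reach2 {V : Type} [DecidableEq V] (G H : SDigraph V) : Prop :=
  Relation.ReflTransGen TwoSwitchStep G H

/-- `H` is obtained from `G` by reorienting an induced directed 3-cycle:
there are distinct `u v w` with arcs `(u,v),(v,w),(w,u)` and no arcs
`(v,u),(w,v),(u,w)`, and `H` replaces these three arcs by the reversed ones. -/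
def CycleReorient {V : Type} [DecidableEq V] (G H : SDigraph V) : Prop :=
  ∃ u v w : V, u ≠ v ∧ v ≠ w ∧ u ≠ w ∧
    G.Adj u v = true ∧ G.Adj v w = true ∧ G.Adj w u = true ∧
    G.Adj v u = false ∧ G.Adj w v = false ∧ G.Adj u w = false ∧
    ∀ x y, H.Adj x y =
      if (x = u ∨ x = v ∨ x = w) ∧ (y = u ∨ y = v ∨ y = w) then G.Adj y x
      else G.Adj x y

/-- The three vertices `u, v, w` induce a directed 3-cycle in `G`: the induced
subgraph on them consists of exactly the three arcs of one cyclic orientation. -/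
def InducesC3 {V : Type} (G : SDigraph V) (u v w : V) : Prop :=
  (G.Adj u v = true ∧ G.Adj v w = true ∧ G.Adj w u = true ∧
    G.Adj v u = false ∧ G.Adj w v = false ∧ G.Adj u w = false) ∨
  (G.Adj v u = true ∧ G.Adj w v = true ∧ G.Adj u w = true ∧
    G.Adj u v = false ∧ G.Adj v w = false ∧ G.Adj w u = false)

/-- The digraph obtained from `G` by reversing all arcs among `{u, v, w}`
(and leaving all other arcs unchanged).  When `{u,v,w}` induces a directed
3-cycle in `G`, this is exactly the reorientation of that 3-cycle. -/
def flip3 {V : Type} [DecidableEq V] (G : SDigraph V) (u v w : V) : SDigraph V where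
  Adj x y :=
    if (x = u ∨ x = v ∨ x = w) ∧ (y = u ∨ y = v ∨ y = w) then G.Adj y x
    else G.Adj x y
  irrefl := by
    intro x
    show (if _ then G.Adj x x else G.Adj x x) = false
    rw [ite_self]
    exact G.irrefl x

/-- The corrected conjugate sequence of an integer sequence `a` (indexed by
`Fin N`, thought of as positions `1, …, N`), at (1-based) position `k`:
`a''_k = |{i : i < k, a_i ≥ k-1}| + |{i : i > k, a_i ≥ k}|`. -/
def cconj {N : ℕ} (a : Fin N → ℕ) (k : ℕ) : ℕ :=
  (Finset.univ.filter fun i : Fin N => (i : ℕ) + 1 < k ∧ k - 1 ≤ a i).card +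
  (Finset.univ.filter fun i : Fin N => k < (i : ℕ) + 1 ∧ k ≤ a i).card

/-- The slack sequence `s̄` of a pair sequence `a` (intended: the positively
ordered sequence `d̄`): `s̄_l = Σ_{i=1}^l [a⁻]''_i − Σ_{i=1}^l a⁺_i`, where
`a⁺, a⁻` are the first- and second-coordinate sequences.  `s̄_0 = 0`. -/
def slackBar {N : ℕ} (a : Fin N → ℕ × ℕ) (l : ℕ) : ℤ :=
  (∑ i ∈ Finset.range l, (cconj (fun j => (a j).2) (i + 1) : ℤ)) -
  ∑ j ∈ Finset.univ.filter (fun j : Fin N => (j : ℕ) < l), ((a j).1 : ℤ)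

/-- The slack sequence `s̲` of a pair sequence `a` (intended: the negatively
ordered sequence `d̲`): `s̲_k = Σ_{i=1}^k [a⁺]''_i − Σ_{i=1}^k a⁻_i`.
`s̲_0 = 0`. -/
def slackUbar {N : ℕ} (a : Fin N → ℕ × ℕ) (k : ℕ) : ℤ :=
  (∑ i ∈ Finset.range k, (cconj (fun j => (a j).1) (i + 1) : ℤ)) -
  ∑ j ∈ Finset.univ.filter (fun j : Fin N => (j : ℕ) < k), ((a j).2 : ℤ)

/-- `a` is non-increasing in the positive lexicographical order (first
coordinate first, ties broken by the second coordinate). -/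
def PosOrdered {N : ℕ} (a : Fin N → ℕ × ℕ) : Prop :=
  ∀ i j : Fin N, i ≤ j →
    (a j).1 < (a i).1 ∨ ((a i).1 = (a j).1 ∧ (a j).2 ≤ (a i).2)

/-- `a` is non-increasing in the negative lexicographical order (second
coordinate first, ties broken by the first coordinate). -/
def NegOrdered {N : ℕ} (a : Fin N → ℕ × ℕ) : Prop :=
  ∀ i j : Fin N, i ≤ j →
    (a j).2 < (a i).2 ∨ ((a i).2 = (a j).2 ∧ (a j).1 ≤ (a i).1)

/-- `b` is a rearrangement (permutation) of the sequence `a`. -/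
def IsRearrangement {N : ℕ} (a b : Fin N → ℕ × ℕ) : Prop :=
  ∃ σ : Equiv.Perm (Fin N), ∀ i, b i = a (σ i)


/-!
Counting the arcs that leave a vertex set `S` gives
`∑_{v ∈ S} d⁺ v = ∑_u |N⁻(u) ∩ S| ≤ ∑_u min (d⁻ u) (|S| - [u ∈ S])`.
When `S` is the set of vertices at the first `m` positions of `d̄`, the slack `s̄_m` is exactly
the gap in this inequality, so `s̄_m = 0` forces every `u` to receive exactly
`min (d⁻ u) (m - [u ∈ S])` arcs from `S`. Positions `l, l+1, l+2` of `d̄` all carry `(k, l)`, so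
`d̄` may be matched with `d` so that they are `j₁, j₂, j₃`; comparing `m = l - 1` with `m = l + 2`
shows that each `jᵢ` receives exactly `l - (l - 1) = 1` arc from `{j₁, j₂, j₃}`. The same
argument for the reversed digraph and `d̲` gives exactly one out-neighbour each, and three
vertices with one in- and one out-neighbour among themselves induce a directed 3-cycle.
-/
open Finset

namespace SDigraph

def reverse {V : Type} (G : SDigraph V) : SDigraph V where
  Adj x y := G.Adj y x
  irrefl := G.irrefl

def comap {V W : Type} (G : SDigraph V) (f : W → V) : SDigraph W where
  Adj x y := G.Adj (f x) (f y)
  irrefl x := G.irrefl (f x)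

def inDegFrom {V : Type} (G : SDigraph V) (S : Finset V) (v : V) : ℕ :=
  #{u ∈ S | G.Adj u v}

theorem inDegFrom_comap {V W : Type} (G : SDigraph V) (σ : W ≃ V) (S : Finset W) (w : W) :
    (G.comap σ).inDegFrom S w = G.inDegFrom (S.map σ.toEmbedding) (σ w) := by
  rw [inDegFrom, inDegFrom, filter_map, card_map]
  rfl

theorem inDegFrom_sdiff_add {V : Type} [DecidableEq V] (G : SDigraph V) {A B : Finset V}
    (h : A ⊆ B) (v : V) : G.inDegFrom (B \ A) v + G.inDegFrom A v = G.inDegFrom B v := by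
  simp only [inDegFrom, card_filter]
  exact sum_sdiff h

end SDigraph

open SDigraph

def inDegBound {V : Type} [DecidableEq V] (d : V → ℕ × ℕ) (S : Finset V) (v : V) : ℕ :=
  min (d v).2 (#S - if v ∈ S then 1 else 0)

section Realizes

variable {V : Type} [Fintype V] [DecidableEq V] {G : SDigraph V} {d : V → ℕ × ℕ}

theorem Realizes.reverse (hG : Realizes G d) : Realizes G.reverse (Prod.swap ∘ d) :=
  fun v => ⟨(hG v).2, (hG v).1⟩

theorem Realizes.comap {W : Type} [Fintype W] [DecidableEq W] (hG : Realizes G d) (σ : W ≃ V) :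
    Realizes (G.comap σ) (d ∘ σ) := by
  intro w
  simp only [outDeg, inDeg, card_filter, Function.comp_apply, ← hG (σ w)]
  exact ⟨σ.sum_comp (fun y => if G.Adj (σ w) y = true then 1 else 0),
    σ.sum_comp (fun y => if G.Adj y (σ w) = true then 1 else 0)⟩

theorem sum_fst_eq_sum_inDegFrom (hG : Realizes G d) (S : Finset V) :
    ∑ v ∈ S, (d v).1 = ∑ u, G.inDegFrom S u := by
  have hout : ∀ v ∈ S, (d v).1 = ∑ u, if G.Adj v u then 1 else 0 := fun v _ => by
    rw [← (hG v).1, outDeg, card_filter]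
  simp only [sum_congr rfl hout, inDegFrom, card_filter]
  exact sum_comm

theorem inDegFrom_le_inDegBound (hG : Realizes G d) (S : Finset V) (v : V) :
    G.inDegFrom S v ≤ inDegBound d S v := by
  refine le_min ?_ ?_
  · rw [← (hG v).2, inDeg, inDegFrom]
    exact card_le_card (filter_subset_filter _ (subset_univ S))
  · split_ifs with hv
    · rw [← card_erase_of_mem hv]
      refine card_le_card fun u hu => mem_erase.2 ⟨?_, (mem_filter.1 hu).1⟩
      rintro rfl
      simp [G.irrefl] at hu
    · exact card_filter_le S _

theorem inDegFrom_eq_inDegBound (hG : Realizes G d) (S : Finset V)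
    (h : ∑ v ∈ S, (d v).1 = ∑ v, inDegBound d S v) (v : V) :
    G.inDegFrom S v = inDegBound d S v :=
  (sum_eq_sum_iff_of_le fun v _ => inDegFrom_le_inDegBound hG S v).1
    ((sum_fst_eq_sum_inDegFrom hG S).symm.trans h) v (mem_univ v)

end Realizes

def initialSeg (N m : ℕ) : Finset (Fin N) := {j | (j : ℕ) < m}

section Slack

variable {N : ℕ}

@[simp]
theorem mem_initialSeg {m : ℕ} {j : Fin N} : j ∈ initialSeg N m ↔ (j : ℕ) < m := by
  simp [initialSeg]

theorem card_initialSeg {m : ℕ} (hm : m ≤ N) : #(initialSeg N m) = m := by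
  rw [initialSeg, Fin.card_filter_val_lt, min_eq_right hm]

theorem sum_cconj (a : Fin N → ℕ) (m : ℕ) :
    ∑ i ∈ range m, cconj a (i + 1) = ∑ j, min (a j) (m - if (j : ℕ) < m then 1 else 0) := by
  induction m with
  | zero => simp
  | succ m ih =>
    have hstep : cconj a (m + 1) = ∑ j : Fin N, ((if (j : ℕ) < m ∧ m ≤ a j then 1 else 0) +
        (if m < (j : ℕ) ∧ m + 1 ≤ a j then 1 else 0)) := by
      rw [sum_add_distrib, cconj, card_filter, card_filter]
      congr 1 <;> exact sum_congr rfl fun j _ => by congr 1; rw [eq_iff_iff]; omega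
    rw [sum_range_succ, ih, hstep, ← sum_add_distrib]
    exact sum_congr rfl fun j _ => by split_ifs <;> omega

theorem slackBar_eq (a : Fin N → ℕ × ℕ) {m : ℕ} (hm : m ≤ N) :
    slackBar a m = ∑ j, (inDegBound a (initialSeg N m) j : ℤ) -
      ∑ j ∈ initialSeg N m, ((a j).1 : ℤ) := by
  rw [slackBar, ← Nat.cast_sum, sum_cconj, Nat.cast_sum]
  congr 2
  ext j
  simp [inDegBound, card_initialSeg hm]

theorem inDegFrom_initialSeg_eq {G : SDigraph (Fin N)} {a : Fin N → ℕ × ℕ} (hG : Realizes G a)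
    {m : ℕ} (hm : m ≤ N) (h : slackBar a m = 0) (i : Fin N) :
    G.inDegFrom (initialSeg N m) i = min (a i).2 (m - if (i : ℕ) < m then 1 else 0) := by
  have hsum : ∑ j ∈ initialSeg N m, (a j).1 = ∑ j, inDegBound a (initialSeg N m) j := by
    rw [slackBar_eq a hm, sub_eq_zero] at h
    exact_mod_cast h.symm
  rw [inDegFrom_eq_inDegBound hG _ hsum, inDegBound, card_initialSeg hm]
  simp only [mem_initialSeg]

end Slack

theorem Equiv.exists_comp_eq_apply_eq {α β γ : Type*} [DecidableEq β] (f : β → γ) (σ : α ≃ β)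
    {p : α} {v : β} (h : f (σ p) = f v) :
    ∃ τ : α ≃ β, f ∘ τ = f ∘ σ ∧ τ p = v ∧ ∀ i ≠ p, σ i ≠ v → τ i = σ i := by
  refine ⟨σ.trans (Equiv.swap (σ p) v), ?_, by simp,
    fun i hi hv => Equiv.swap_apply_of_ne_of_ne (σ.injective.ne hi) hv⟩
  funext i
  simp only [Function.comp_apply, Equiv.trans_apply, Equiv.swap_apply_def]
  split_ifs with hp hv
  · rw [hp, h]
  · rw [hv, h]
  · rfl

theorem Equiv.exists_comp_eq_apply_eq₃ {α β γ : Type*} [DecidableEq β] (f : β → γ) (σ : α ≃ β)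
    {p₀ p₁ p₂ : α} (hp₀₁ : p₀ ≠ p₁) (hp₀₂ : p₀ ≠ p₂) (hp₁₂ : p₁ ≠ p₂)
    {v₀ v₁ v₂ : β} (hv₀₁ : v₀ ≠ v₁) (hv₀₂ : v₀ ≠ v₂) (hv₁₂ : v₁ ≠ v₂)
    (h₀ : f (σ p₀) = f v₀) (h₁ : f (σ p₁) = f v₁) (h₂ : f (σ p₂) = f v₂) :
    ∃ τ : α ≃ β, f ∘ τ = f ∘ σ ∧ τ p₀ = v₀ ∧ τ p₁ = v₁ ∧ τ p₂ = v₂ := by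
  obtain ⟨τ₀, hf₀, hτ₀, -⟩ := exists_comp_eq_apply_eq f σ h₀
  obtain ⟨τ₁, hf₁, hτ₁, hfix₁⟩ :=
    exists_comp_eq_apply_eq f τ₀ ((congrFun hf₀ p₁).trans h₁)
  obtain ⟨τ₂, hf₂, hτ₂, hfix₂⟩ :=
    exists_comp_eq_apply_eq f τ₁ ((congrFun (hf₁.trans hf₀) p₂).trans h₂)
  have hτ₁₀ : τ₁ p₀ = v₀ := by rw [hfix₁ p₀ hp₀₁ (by rwa [hτ₀]), hτ₀]
  refine ⟨τ₂, hf₂.trans (hf₁.trans hf₀), ?_, ?_, hτ₂⟩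
  · rw [hfix₂ p₀ hp₀₂ (by rwa [hτ₁₀]), hτ₁₀]
  · rw [hfix₂ p₁ hp₁₂ (by rwa [hτ₁]), hτ₁]

theorem IsRearrangement.comp {N : ℕ} {a b : Fin N → ℕ × ℕ} (h : IsRearrangement a b)
    (f : ℕ × ℕ → ℕ × ℕ) : IsRearrangement (f ∘ a) (f ∘ b) :=
  let ⟨σ, hσ⟩ := h
  ⟨σ, fun i => congrArg f (hσ i)⟩

set_option synthInstance.maxSize 1024 in
theorem inducesC3_of_inDegFrom_eq_one {V : Type} [DecidableEq V] {G : SDigraph V} {u v w : V}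
    (huv : u ≠ v) (hvw : v ≠ w) (huw : u ≠ w)
    (hin : ∀ x ∈ ({u, v, w} : Finset V), G.inDegFrom {u, v, w} x = 1)
    (hout : ∀ x ∈ ({u, v, w} : Finset V), G.reverse.inDegFrom {u, v, w} x = 1) :
    InducesC3 G u v w := by
  have hcount : ∀ (H : SDigraph V) x, H.inDegFrom {u, v, w} x =
      (if H.Adj u x then 1 else 0) + ((if H.Adj v x then 1 else 0) +
        (if H.Adj w x then 1 else 0)) := fun H x => by
    rw [inDegFrom, card_filter, sum_insert (by simp [huv, huw]), sum_insert (by simp [hvw]),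
      sum_singleton]
  have hu := hin u (by simp)
  have hv := hin v (by simp)
  have hw := hin w (by simp)
  have hu' := hout u (by simp)
  have hv' := hout v (by simp)
  have hw' := hout w (by simp)
  simp only [hcount, reverse, G.irrefl, Bool.false_eq_true, if_false, zero_add,
    add_zero] at hu hv hw hu' hv' hw'
  unfold InducesC3
  generalize G.Adj u v = a, G.Adj v w = b, G.Adj w u = c, G.Adj v u = a',
    G.Adj w v = b', G.Adj u w = c' at *
  revert a b c a' b' c'
  decide

theorem inDegFrom_window_eq_one {N : ℕ} {G : SDigraph (Fin N)} {a : Fin N → ℕ × ℕ}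
    (hG : Realizes G a) {l : ℕ} (hl : 1 ≤ l) (hlN : l + 2 ≤ N)
    (hs₀ : slackBar a (l - 1) = 0) (hs₃ : slackBar a (l + 2) = 0)
    {p : Fin N} (hp : p ∈ initialSeg N (l + 2) \ initialSeg N (l - 1)) (hap : (a p).2 = l) :
    G.inDegFrom (initialSeg N (l + 2) \ initialSeg N (l - 1)) p = 1 := by
  rw [mem_sdiff, mem_initialSeg, mem_initialSeg] at hp
  have hsplit := G.inDegFrom_sdiff_add
    (A := initialSeg N (l - 1)) (B := initialSeg N (l + 2))
    (fun j => by simp only [mem_initialSeg]; omega) p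
  rw [inDegFrom_initialSeg_eq hG (by omega) hs₀, inDegFrom_initialSeg_eq hG (by omega) hs₃,
    hap] at hsplit
  split_ifs at hsplit <;> omega

theorem inDegFrom_eq_one_of_slackBar_eq_zero {N : ℕ} {G : SDigraph (Fin N)}
    {d a : Fin N → ℕ × ℕ} (hG : Realizes G d) (ha : IsRearrangement d a)
    {j₁ j₂ j₃ : Fin N} (h12 : j₁ ≠ j₂) (h23 : j₂ ≠ j₃) (h13 : j₁ ≠ j₃)
    {k l : ℕ} (hl : 1 ≤ l) (hlN : l + 1 < N)
    (hd : d j₁ = (k, l) ∧ d j₂ = (k, l) ∧ d j₃ = (k, l))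
    (hcoord : a ⟨l - 1, by omega⟩ = (k, l) ∧ a ⟨l, by omega⟩ = (k, l) ∧ a ⟨l + 1, hlN⟩ = (k, l))
    (hs₀ : slackBar a (l - 1) = 0) (hs₃ : slackBar a (l + 2) = 0) :
    ∀ v ∈ ({j₁, j₂, j₃} : Finset (Fin N)), G.inDegFrom {j₁, j₂, j₃} v = 1 := by
  obtain ⟨σ, hσ⟩ := ha
  set p₀ : Fin N := ⟨l - 1, by omega⟩
  set p₁ : Fin N := ⟨l, by omega⟩
  set p₂ : Fin N := ⟨l + 1, hlN⟩
  obtain ⟨τ, hτ, hτ₀, hτ₁, hτ₂⟩ := Equiv.exists_comp_eq_apply_eq₃ d σ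
    (p₀ := p₀) (p₁ := p₁) (p₂ := p₂) (by simp [p₀, p₁, Fin.ext_iff]; omega)
    (by simp [p₀, p₂, Fin.ext_iff]) (by simp [p₁, p₂, Fin.ext_iff]) h12 h13 h23
    (by rw [← hσ, hcoord.1, hd.1]) (by rw [← hσ, hcoord.2.1, hd.2.1])
    (by rw [← hσ, hcoord.2.2, hd.2.2])
  have hGτ : Realizes (G.comap τ) a := by
    convert hG.comap τ
    funext i
    rw [hτ, Function.comp_apply, hσ]
  have hwindow : (initialSeg N (l + 2) \ initialSeg N (l - 1)).map τ.toEmbedding =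
      {j₁, j₂, j₃} := by
    have : initialSeg N (l + 2) \ initialSeg N (l - 1) = {p₀, p₁, p₂} := by
      ext j
      simp only [mem_sdiff, mem_initialSeg, mem_insert, mem_singleton, p₀, p₁, p₂, Fin.ext_iff]
      omega
    simp [this, hτ₀, hτ₁, hτ₂]
  intro v hv
  have hdv : (d v).2 = l := by
    simp only [mem_insert, mem_singleton] at hv
    rcases hv with rfl | rfl | rfl <;> simp [hd]
  rw [← hwindow, mem_map] at hv
  obtain ⟨p, hp, rfl⟩ := hv
  have hap : (a p).2 = l := by
    rw [hσ, ← Function.comp_apply (f := d), ← hτ]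
    exact hdv
  rw [← hwindow]
  exact (inDegFrom_comap G τ _ p).symm.trans
    (inDegFrom_window_eq_one hGτ hl (by omega) hs₀ hs₃ hp hap)

/-- degree-sequence criterion, sufficiency: let `d` be a
digraphic pair sequence, `d̄` its positive and `d̲` its negative
lexicographical ordering.  If there are distinct coordinates `j₁, j₂, j₃` and
`(k,l) ≥ (1,1)` with `d_{j₁} = d_{j₂} = d_{j₃} = (k,l)`, the (1-based)
coordinates `l, l+1, l+2` of `d̄` and `k, k+1, k+2` of `d̲` all equal `(k,l)`,
and the slacks satisfy `(s̄_{l-1}, s̄_l, s̄_{l+1}, s̄_{l+2}) = (0,1,1,0)` and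
`(s̲_{k-1}, s̲_k, s̲_{k+1}, s̲_{k+2}) = (0,1,1,0)`, then `v_{j₁}, v_{j₂},
v_{j₃}` induce a directed 3-cycle in every realization of `d`. -/
theorem statement13 {N : ℕ} (d : Fin N → ℕ × ℕ)
    (dbar dubar : Fin N → ℕ × ℕ)
    (hbarperm : IsRearrangement d dbar)
    (hubarperm : IsRearrangement d dubar)
    (j₁ j₂ j₃ : Fin N) (h12 : j₁ ≠ j₂) (h23 : j₂ ≠ j₃) (h13 : j₁ ≠ j₃)
    (k l : ℕ) (hk1 : 1 ≤ k) (hl1 : 1 ≤ l)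
    (hlN : l + 1 < N) (hkN : k + 1 < N)
    (hval : d j₁ = (k, l) ∧ d j₂ = (k, l) ∧ d j₃ = (k, l))
    (hbarcoord : dbar ⟨l - 1, by omega⟩ = (k, l) ∧
      dbar ⟨l, by omega⟩ = (k, l) ∧ dbar ⟨l + 1, by omega⟩ = (k, l))
    (hubarcoord : dubar ⟨k - 1, by omega⟩ = (k, l) ∧
      dubar ⟨k, by omega⟩ = (k, l) ∧ dubar ⟨k + 1, by omega⟩ = (k, l))
    (hbarslack : slackBar dbar (l - 1) = 0 ∧ slackBar dbar l = 1 ∧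
      slackBar dbar (l + 1) = 1 ∧ slackBar dbar (l + 2) = 0)
    (hubarslack : slackUbar dubar (k - 1) = 0 ∧ slackUbar dubar k = 1 ∧
      slackUbar dubar (k + 1) = 1 ∧ slackUbar dubar (k + 2) = 0) :
    ∀ G : SDigraph (Fin N), Realizes G d → InducesC3 G j₁ j₂ j₃ := by
  intro G hG
  have hin := inDegFrom_eq_one_of_slackBar_eq_zero hG hbarperm h12 h23 h13 hl1 hlN hval
    hbarcoord hbarslack.1 hbarslack.2.2.2
  -- `slackBar (Prod.swap ∘ dubar)` unfolds to `slackUbar dubar`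
  have hout := inDegFrom_eq_one_of_slackBar_eq_zero hG.reverse (hubarperm.comp Prod.swap)
    h12 h23 h13 (k := l) (l := k) hk1 hkN (by simp [hval]) (by simp [hubarcoord])
    hubarslack.1 hubarslack.2.2.2
  exact inducesC3_of_inDegFrom_eq_one h12 h23 h13 hin hout
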